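/- arXiv:1809.04755 — 3 statements merged into one kernel-verified Lean document; each statement's English description precedes it below -/
import Mathlib

section
/- The set J₅ = {VII} is cadential for the triadic interpretation of the major scale: the diminished triad {11,2,5} of the C major scale is contained in no other transposition T^a(C), a ≠ 0, of the C major scale. -/
def Cmaj : Finset (ZMod 12) := {0, 2, 4, 5, 7, 9, 11}

def Transpose (a : ZMod 12) (S : Finset (ZMod 12)) : Finset (ZMod 12) :=
  S.image (fun x => x + a)

/-- {VII} is cadential: the diminished triad {11,2,5} lies in no other transposition of C. -/
theorem degree_VII_cadential :
    ∀ a : ZMod 12, ({11, 2, 5} : Finset (ZMod 12)) ⊆ Transpose a Cmaj → a = 0 := by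
  decide
end

section
/- The set {II, V} is cadential in the triadic setting: the union {2,5,9} ∪ {7,11,2} is contained in T^a(C) only for a = 0. -/
/-- {II, V} is cadential: {2,5,9} ∪ {7,11,2} ⊆ Tᵃ(C) only for a = 0. -/
theorem degrees_II_V_cadential :
    ∀ a : ZMod 12,
      (({2, 5, 9} : Finset (ZMod 12)) ∪ {7, 11, 2}) ⊆ Transpose a Cmaj → a = 0 := by
  decide
end

section
/- The sets J₁={II,III}, J₂={II,V}, J₃={III,IV}, J₄={IV,V}, J₅={VII} are exactly the minimal cadential sets of degrees for the triadic interpretation of the major scale: each is cadential, no proper subset of any is cadential, and every cadential set of degrees contains one of them. -/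
def scaleTone : Fin 7 → ZMod 12 := ![0, 2, 4, 5, 7, 9, 11]

/-- The `i`-th triadic degree (0-based: `0 ↦ I`, ..., `6 ↦ VII`). -/
def triad (i : Fin 7) : Finset (ZMod 12) :=
  {scaleTone i, scaleTone (i + 2), scaleTone (i + 4)}

/-- A set of degree indices is cadential if the union of its triads determines
the tonality uniquely among the twelve transpositions of C. -/
def Cadential (S : Finset (Fin 7)) : Prop :=
  ∀ a : ZMod 12, S.biUnion triad ⊆ Transpose a Cmaj → a = 0

set_option maxRecDepth 100000 in
/-- J₁={II,III}, J₂={II,V}, J₃={III,IV}, J₄={IV,V}, J₅={VII} are exactly the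
minimal cadential sets, and every cadential set contains one of them. -/
theorem minimal_cadential_sets_triadic :
    (∀ S : Finset (Fin 7),
      (Cadential S ∧ ∀ S' ⊂ S, ¬ Cadential S') ↔
        S ∈ ({({1,2} : Finset (Fin 7)), {1,4}, {2,3}, {3,4}, {6}} :
          Finset (Finset (Fin 7)))) ∧
    (∀ S : Finset (Fin 7), Cadential S →
      ∃ J ∈ ({({1,2} : Finset (Fin 7)), {1,4}, {2,3}, {3,4}, {6}} :
        Finset (Finset (Fin 7))), J ⊆ S) := by
  unfold Cadential Cmaj Transpose triad scaleTone
  decide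
end
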